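/- arXiv:2006.01568 — 2 statements merged into one kernel-verified Lean document; each statement's English description precedes it below -/
import Mathlib

section
/- For any finite poset P, evacuation and promotion on linear extensions satisfy Evac ∘ Pro = Pro⁻¹ ∘ Evac. -/
open scoped Classical

/-- A linear extension of a poset `P`, represented as a list `(f 0, f 1, ..., f (n-1))`
of the elements of `P`, each appearing once, such that `f i ≤ f j` in `P` implies `i ≤ j`. -/
def IsLinExt {P : Type*} [PartialOrder P] {n : ℕ} (f : Fin n ≃ P) : Prop :=
  ∀ i j : Fin n, f i ≤ f j → i ≤ j

/-- The Bender–Knuth involution swapping the entries in (0-indexed) positions `i` and `i+1`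
of a linear extension, provided those two entries are incomparable. -/
noncomputable def bk {P : Type*} [PartialOrder P] (n : ℕ) (i : ℕ) (f : Fin n ≃ P) : Fin n ≃ P :=
  if h : i + 1 < n then
    if ¬ f ⟨i, Nat.lt_of_succ_lt h⟩ ≤ f ⟨i + 1, h⟩ ∧
       ¬ f ⟨i + 1, h⟩ ≤ f ⟨i, Nat.lt_of_succ_lt h⟩ then
      (Equiv.swap ⟨i, Nat.lt_of_succ_lt h⟩ ⟨i + 1, h⟩).trans f
    else f
  else f

/-- `proUpTo n k = bk (k-1) ∘ ⋯ ∘ bk 1 ∘ bk 0`. -/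
noncomputable def proUpTo {P : Type*} [PartialOrder P] (n : ℕ) : ℕ → (Fin n ≃ P) → (Fin n ≃ P)
  | 0, f => f
  | k + 1, f => bk n k (proUpTo n k f)

/-- Promotion: the composition `bk (n-2) ∘ ⋯ ∘ bk 1 ∘ bk 0` of all Bender–Knuth involutions. -/
noncomputable def pro {P : Type*} [PartialOrder P] (n : ℕ) (f : Fin n ≃ P) : Fin n ≃ P :=
  proUpTo n (n - 1) f

noncomputable def evacAux {P : Type*} [PartialOrder P] (n : ℕ) : ℕ → (Fin n ≃ P) → (Fin n ≃ P)
  | 0, f => f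
  | k + 1, f => evacAux n k (proUpTo n (k + 1) f)

/-- Evacuation: `(bk 0) ∘ (bk 1 ∘ bk 0) ∘ ⋯ ∘ (bk (n-2) ∘ ⋯ ∘ bk 1 ∘ bk 0)`. -/
noncomputable def evac {P : Type*} [PartialOrder P] (n : ℕ) (f : Fin n ≃ P) : Fin n ≃ P :=
  evacAux n (n - 1) f

/-- The reversed word: `revUpTo n k = bk 0 ∘ bk 1 ∘ ⋯ ∘ bk (k-1)`. -/
noncomputable def revUpTo {P : Type*} [PartialOrder P] (n : ℕ) : ℕ → (Fin n ≃ P) → (Fin n ≃ P)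
  | 0, f => f
  | k + 1, f => revUpTo n k (bk n k f)

section
variable {P : Type*} [PartialOrder P] {n : ℕ}

lemma bk_of_lt {i : ℕ} (h : i + 1 < n) (f : Fin n ≃ P) :
    bk n i f = if ¬ f ⟨i, Nat.lt_of_succ_lt h⟩ ≤ f ⟨i + 1, h⟩ ∧
       ¬ f ⟨i + 1, h⟩ ≤ f ⟨i, Nat.lt_of_succ_lt h⟩ then
      (Equiv.swap ⟨i, Nat.lt_of_succ_lt h⟩ ⟨i + 1, h⟩).trans f
    else f := by
  simp [bk, h]

lemma bk_of_ge {i : ℕ} (h : ¬ i + 1 < n) (f : Fin n ≃ P) : bk n i f = f := by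
  simp [bk, h]

/-- Each Bender–Knuth operator is an involution. -/
lemma bk_bk (i : ℕ) (f : Fin n ≃ P) : bk n i (bk n i f) = f := by
  by_cases h : i + 1 < n
  · set a : Fin n := ⟨i, Nat.lt_of_succ_lt h⟩ with ha
    set b : Fin n := ⟨i + 1, h⟩ with hb
    rw [bk_of_lt h f]
    by_cases hc : ¬ f a ≤ f b ∧ ¬ f b ≤ f a
    · rw [if_pos hc, bk_of_lt h]
      have e1 : ((Equiv.swap a b).trans f) a = f b := by simp
      have e2 : ((Equiv.swap a b).trans f) b = f a := by simp
      rw [if_pos (by rw [e1, e2]; exact ⟨hc.2, hc.1⟩)]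
      rw [← Equiv.trans_assoc, Equiv.swap_swap, Equiv.refl_trans]
    · rw [if_neg hc, bk_of_lt h, if_neg hc]
  · rw [bk_of_ge h, bk_of_ge h]

set_option linter.unusedSectionVars false in
lemma swap_trans_comm {a b c d : Fin n} (hac : a ≠ c) (had : a ≠ d) (hbc : b ≠ c) (hbd : b ≠ d)
    (f : Fin n ≃ P) :
    (Equiv.swap a b).trans ((Equiv.swap c d).trans f) =
    (Equiv.swap c d).trans ((Equiv.swap a b).trans f) := by
  rw [← Equiv.trans_assoc, ← Equiv.trans_assoc]
  congr 1
  ext x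
  simp only [Equiv.trans_apply, Equiv.swap_apply_def]
  split_ifs <;> simp_all

/-- Distant Bender–Knuth operators commute. -/
lemma bk_comm {i j : ℕ} (hij : i + 2 ≤ j) (f : Fin n ≃ P) :
    bk n i (bk n j f) = bk n j (bk n i f) := by
  by_cases hj : j + 1 < n
  · have hi : i + 1 < n := by omega
    set ai : Fin n := ⟨i, Nat.lt_of_succ_lt hi⟩ with hai
    set bi : Fin n := ⟨i + 1, hi⟩ with hbi
    set aj : Fin n := ⟨j, Nat.lt_of_succ_lt hj⟩ with haj
    set bj : Fin n := ⟨j + 1, hj⟩ with hbj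
    have h1 : ai ≠ aj := by simp [hai, haj, Fin.ext_iff]; omega
    have h2 : ai ≠ bj := by simp [hai, hbj, Fin.ext_iff]; omega
    have h3 : bi ≠ aj := by simp [hbi, haj, Fin.ext_iff]; omega
    have h4 : bi ≠ bj := by simp [hbi, hbj, Fin.ext_iff]; omega
    have eji1 : ((Equiv.swap aj bj).trans f) ai = f ai := by
      simp [Equiv.swap_apply_of_ne_of_ne h1 h2]
    have eji2 : ((Equiv.swap aj bj).trans f) bi = f bi := by
      simp [Equiv.swap_apply_of_ne_of_ne h3 h4]
    have eij1 : ((Equiv.swap ai bi).trans f) aj = f aj := by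
      simp [Equiv.swap_apply_of_ne_of_ne h1.symm h3.symm]
    have eij2 : ((Equiv.swap ai bi).trans f) bj = f bj := by
      simp [Equiv.swap_apply_of_ne_of_ne h2.symm h4.symm]
    rw [bk_of_lt hj f, bk_of_lt hi f]
    by_cases hcj : ¬ f aj ≤ f bj ∧ ¬ f bj ≤ f aj <;>
      by_cases hci : ¬ f ai ≤ f bi ∧ ¬ f bi ≤ f ai
    · rw [if_pos hcj, if_pos hci, bk_of_lt hi, bk_of_lt hj]
      rw [if_pos (by rw [eji1, eji2]; exact hci), if_pos (by rw [eij1, eij2]; exact hcj)]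
      exact swap_trans_comm h1 h2 h3 h4 f
    · rw [if_pos hcj, if_neg hci, bk_of_lt hi, bk_of_lt hj]
      rw [if_neg (by rw [eji1, eji2]; exact hci), if_pos hcj]
    · rw [if_neg hcj, if_pos hci, bk_of_lt hi, bk_of_lt hj]
      rw [if_pos hci, if_neg (by rw [eij1, eij2]; exact hcj)]
    · rw [if_neg hcj, if_neg hci, bk_of_lt hi, bk_of_lt hj]
      rw [if_neg hci, if_neg hcj]
  · rw [bk_of_ge hj, bk_of_ge hj]

/-- `revUpTo k` is a left inverse of `proUpTo k`. -/
lemma revUpTo_proUpTo (k : ℕ) (f : Fin n ≃ P) :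
    revUpTo n k (proUpTo n k f) = f := by
  induction k generalizing f with
  | zero => rfl
  | succ k ih =>
    show revUpTo n k (bk n k (bk n k (proUpTo n k f))) = f
    rw [bk_bk, ih]

/-- `revUpTo k` is a right inverse of `proUpTo k`. -/
lemma proUpTo_revUpTo (k : ℕ) (f : Fin n ≃ P) :
    proUpTo n k (revUpTo n k f) = f := by
  induction k generalizing f with
  | zero => rfl
  | succ k ih =>
    show bk n k (proUpTo n k (revUpTo n k (bk n k f))) = f
    rw [ih, bk_bk]

/-- `bk i` commutes with `proUpTo k` when `i ≥ k + 1`. -/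
lemma bk_proUpTo {i k : ℕ} (h : k + 1 ≤ i) (f : Fin n ≃ P) :
    bk n i (proUpTo n k f) = proUpTo n k (bk n i f) := by
  induction k generalizing f with
  | zero => rfl
  | succ k ih =>
    show bk n i (bk n k (proUpTo n k f)) = bk n k (proUpTo n k (bk n i f))
    rw [← bk_comm (by omega), ih (by omega)]

/-- `bk i` commutes with `evacAux k` when `i ≥ k + 1`. -/
lemma bk_evacAux {i k : ℕ} (h : k + 1 ≤ i) (f : Fin n ≃ P) :
    bk n i (evacAux n k f) = evacAux n k (bk n i f) := by
  induction k generalizing f with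
  | zero => rfl
  | succ k ih =>
    show bk n i (evacAux n k (proUpTo n (k + 1) f)) =
      evacAux n k (proUpTo n (k + 1) (bk n i f))
    rw [ih (by omega), bk_proUpTo (by omega)]

/-- Key lemma: `proUpTo (k+1) ∘ evacAux k = evacAux k ∘ revUpTo (k+1)`. -/
lemma proUpTo_evacAux (k : ℕ) (f : Fin n ≃ P) :
    proUpTo n (k + 1) (evacAux n k f) = evacAux n k (revUpTo n (k + 1) f) := by
  induction k generalizing f with
  | zero => rfl
  | succ k ih =>
    show bk n (k + 1) (proUpTo n (k + 1) (evacAux n k (proUpTo n (k + 1) f))) =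
      evacAux n k (proUpTo n (k + 1) (revUpTo n (k + 1) (bk n (k + 1) f)))
    rw [ih, revUpTo_proUpTo, proUpTo_revUpTo, bk_evacAux (le_refl (k + 1))]

end

/-- `Evac ∘ Pro = Pro⁻¹ ∘ Evac`, stated equivalently as `Pro ∘ Evac ∘ Pro = Evac`. -/
theorem evac_pro {P : Type*} [PartialOrder P] (n : ℕ)
    (f : Fin n ≃ P) (hf : IsLinExt f) :
    pro n (evac n (pro n f)) = evac n f := by
  unfold pro evac
  cases hm : n - 1 with
  | zero => rfl
  | succ k =>
    show proUpTo n (k + 1) (evacAux n k (proUpTo n (k + 1) (proUpTo n (k + 1) f))) =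
      evacAux n k (proUpTo n (k + 1) f)
    rw [proUpTo_evacAux, revUpTo_proUpTo]
end

section
/- For any finite graded poset P, if Row^{r(P)+2} acting on P-partitions of height m equals the map induced by a poset automorphism δ of P, then δ is an involution. -/
open scoped Classical

/-- A `P`-partition of height `m`: a weakly order-preserving map `P → {0, ..., m}`. -/
def IsPPart {P : Type*} [PartialOrder P] (m : ℕ) (f : P → ℕ) : Prop :=
  (∀ p, f p ≤ m) ∧ Monotone f

/-- The new value of the piecewise-linear toggle at `p`:
`min{π(r) : p ⋖ r} + max{π(r) : r ⋖ p} − π(p)`, with `min ∅ = m` and `max ∅ = 0`. -/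
noncomputable def togVal {P : Type*} [PartialOrder P] [Fintype P]
    (m : ℕ) (f : P → ℕ) (p : P) : ℕ :=
  (insert m ((Finset.univ.filter fun r => p ⋖ r).image f)).min'
      (Finset.insert_nonempty _ _) +
    (insert 0 ((Finset.univ.filter fun r => r ⋖ p).image f)).max'
      (Finset.insert_nonempty _ _) -
    f p

/-- The piecewise-linear toggle `τ_p` on `P`-partitions of height `m`. -/
noncomputable def tog {P : Type*} [PartialOrder P] [Fintype P]
    (m : ℕ) (p : P) (f : P → ℕ) : P → ℕ :=
  fun q => if q = p then togVal m f p else f q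

/-- The rank toggle `τ_i`: simultaneously (equivalently, in any order) toggle all elements
of rank `i`. -/
noncomputable def rankTog {P : Type*} [PartialOrder P] [Fintype P]
    (rk : P → ℕ) (m i : ℕ) (f : P → ℕ) : P → ℕ :=
  fun q => if rk q = i then togVal m f q else f q

/-- `rowFrom rk m r j = τ_{r-j} ∘ τ_{r-j+1} ∘ ⋯ ∘ τ_r` (rank toggles, top rank first). -/
noncomputable def rowFrom {P : Type*} [PartialOrder P] [Fintype P]
    (rk : P → ℕ) (m r : ℕ) : ℕ → (P → ℕ) → (P → ℕ)
  | 0, f => rankTog rk m r f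
  | j + 1, f => rankTog rk m (r - (j + 1)) (rowFrom rk m r j f)

/-- Rowmotion `Row = τ_0 ∘ τ_1 ∘ ⋯ ∘ τ_r` on `P`-partitions of height `m`, for a graded
poset with rank function `rk` and top rank `r`. -/
noncomputable def rowm {P : Type*} [PartialOrder P] [Fintype P]
    (rk : P → ℕ) (m r : ℕ) (f : P → ℕ) : P → ℕ :=
  rowFrom rk m r r f

noncomputable def rvacAux {P : Type*} [PartialOrder P] [Fintype P]
    (rk : P → ℕ) (m r : ℕ) : ℕ → (P → ℕ) → (P → ℕ)
  | 0, f => rowFrom rk m r 0 f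
  | j + 1, f => rvacAux rk m r j (rowFrom rk m r (j + 1) f)

/-- Rowvacuation `Rvac = (τ_r) ∘ (τ_{r-1} ∘ τ_r) ∘ ⋯ ∘ (τ_0 ∘ ⋯ ∘ τ_{r-1} ∘ τ_r)`. -/
noncomputable def rvac {P : Type*} [PartialOrder P] [Fintype P]
    (rk : P → ℕ) (m r : ℕ) (f : P → ℕ) : P → ℕ :=
  rvacAux rk m r r f

/-- Dual rowvacuation `Rvac*(π) = (Rvac(π*))*`, where `π*(p) = m − π(p)` is a
`P*`-partition of the dual poset (whose rank function is `p ↦ r − rk p`). -/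
noncomputable def rvacStar {P : Type*} [PartialOrder P] [Fintype P]
    (rk : P → ℕ) (m r : ℕ) (f : P → ℕ) : P → ℕ :=
  fun p => m -
    rvac (P := Pᵒᵈ) (fun q => r - rk (OrderDual.ofDual q)) m r
      (fun q => m - f (OrderDual.ofDual q)) (OrderDual.toDual p)

/-!
Rank toggles are involutions on `P`-partitions, and toggles at ranks at distance at least two
commute. In the permutation group of `P`-partitions this already forces rowvacuation `V` to be an
involution with `V * Row * V = Row⁻¹`. An automorphism `δ` of a graded poset preserves ranks, so
precomposition `δ^*` with `δ` commutes with every rank toggle, hence with `V`. If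
`Row ^ (r + 2) = δ^*`, conjugating by `V` gives `δ^* = (δ^*)⁻¹`: every `P`-partition is
`δ²`-invariant, and indicator functions of principal up-sets then force `δ² = id`.
-/

theorem IsPPart.comp_monotone {P Q : Type*} [PartialOrder P] [PartialOrder Q] {m : ℕ}
    {f : P → ℕ} {φ : Q → P} (hf : IsPPart m f) (hφ : Monotone φ) : IsPPart m (f ∘ φ) :=
  ⟨fun q => hf.1 (φ q), hf.2.comp hφ⟩

section Toggle

variable {P Q : Type*} [PartialOrder P] [Fintype P] [PartialOrder Q] [Fintype Q]

noncomputable def minAbove (m : ℕ) (f : P → ℕ) (p : P) : ℕ :=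
  (insert m ((Finset.univ.filter fun r => p ⋖ r).image f)).min' (Finset.insert_nonempty _ _)

noncomputable def maxBelow (f : P → ℕ) (p : P) : ℕ :=
  (insert 0 ((Finset.univ.filter fun r => r ⋖ p).image f)).max' (Finset.insert_nonempty _ _)

variable {m : ℕ} {f g : P → ℕ} {p x : P}

theorem togVal_eq (m : ℕ) (f : P → ℕ) (p : P) :
    togVal m f p = minAbove m f p + maxBelow f p - f p := rfl

theorem minAbove_le_bound : minAbove m f p ≤ m :=
  Finset.min'_le _ _ (Finset.mem_insert_self _ _)

theorem minAbove_le (h : p ⋖ x) : minAbove m f p ≤ f x :=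
  Finset.min'_le _ _ (Finset.mem_insert_of_mem (Finset.mem_image_of_mem f (by simp [h])))

theorem le_maxBelow (h : x ⋖ p) : f x ≤ maxBelow f p :=
  Finset.le_max' _ _ (Finset.mem_insert_of_mem (Finset.mem_image_of_mem f (by simp [h])))

theorem le_minAbove (hf : IsPPart m f) : f p ≤ minAbove m f p := by
  refine Finset.le_min' _ _ _ fun y hy => ?_
  simp only [Finset.mem_insert, Finset.mem_image, Finset.mem_filter, Finset.mem_univ,
    true_and] at hy
  obtain rfl | ⟨x, hx, rfl⟩ := hy
  exacts [hf.1 p, hf.2 hx.le]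

theorem maxBelow_le (hf : Monotone f) : maxBelow f p ≤ f p := by
  refine Finset.max'_le _ _ _ fun y hy => ?_
  simp only [Finset.mem_insert, Finset.mem_image, Finset.mem_filter, Finset.mem_univ,
    true_and] at hy
  obtain rfl | ⟨x, hx, rfl⟩ := hy
  exacts [Nat.zero_le _, hf hx.le]

theorem minAbove_congr (h : ∀ x, p ⋖ x → f x = g x) : minAbove m f p = minAbove m g p := by
  unfold minAbove
  congr 2
  exact Finset.image_congr fun x hx => h x (by simpa using hx)

theorem maxBelow_congr (h : ∀ x, x ⋖ p → f x = g x) : maxBelow f p = maxBelow g p := by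
  unfold maxBelow
  congr 2
  exact Finset.image_congr fun x hx => h x (by simpa using hx)

theorem minAbove_comp_orderIso (δ : P ≃o Q) (f : Q → ℕ) (p : P) :
    minAbove m (f ∘ δ) p = minAbove m f (δ p) := by
  unfold minAbove
  congr 2
  ext y
  simp only [Finset.mem_image, Finset.mem_filter, Finset.mem_univ, true_and, Function.comp_apply]
  exact (δ.surjective.exists.trans (by simp [apply_covBy_apply_iff])).symm

theorem maxBelow_comp_orderIso (δ : P ≃o Q) (f : Q → ℕ) (p : P) :
    maxBelow (f ∘ δ) p = maxBelow f (δ p) := by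
  unfold maxBelow
  congr 2
  ext y
  simp only [Finset.mem_image, Finset.mem_filter, Finset.mem_univ, true_and, Function.comp_apply]
  exact (δ.surjective.exists.trans (by simp [apply_covBy_apply_iff])).symm

theorem togVal_comp_orderIso (δ : P ≃o Q) (f : Q → ℕ) (p : P) :
    togVal m (f ∘ δ) p = togVal m f (δ p) := by
  rw [togVal_eq, togVal_eq, minAbove_comp_orderIso, maxBelow_comp_orderIso, Function.comp_apply]

end Toggle

theorem rank_unique {P : Type*} [PartialOrder P] [Finite P] {rk rk' : P → ℕ}
    (hcov : ∀ p q : P, p ⋖ q → rk q = rk p + 1) (hmin : ∀ p : P, IsMin p → rk p = 0)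
    (hcov' : ∀ p q : P, p ⋖ q → rk' q = rk' p + 1)
    (hmin' : ∀ p : P, IsMin p → rk' p = 0) :
    rk = rk' := by
  funext p
  induction p using WellFoundedLT.induction with
  | _ p ih =>
    by_cases hp : IsMin p
    · rw [hmin p hp, hmin' p hp]
    · obtain ⟨b, hb⟩ := not_isMin_iff.1 hp
      obtain ⟨c, -, hc⟩ := exists_le_covBy_of_lt hb
      rw [hcov c p hc, hcov' c p hc, ih c hc.lt]

theorem rank_apply_orderIso {P : Type*} [PartialOrder P] [Finite P] {rk : P → ℕ}
    (hcov : ∀ p q : P, p ⋖ q → rk q = rk p + 1) (hmin : ∀ p : P, IsMin p → rk p = 0)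
    (δ : P ≃o P) (p : P) : rk (δ p) = rk p :=
  congrFun (rank_unique (rk := rk ∘ δ) (fun _ _ h => hcov _ _ ((apply_covBy_apply_iff δ).2 h))
    (fun _ hp => hmin _ (δ.isMin_apply.2 hp)) hcov hmin) p

section RankToggle

variable {P : Type*} [PartialOrder P] [Fintype P] {rk : P → ℕ} {m i : ℕ} {f : P → ℕ}
  {q : P}

theorem rankTog_of_eq (h : rk q = i) : rankTog rk m i f q = togVal m f q := if_pos h

theorem rankTog_of_ne (h : rk q ≠ i) : rankTog rk m i f q = f q := if_neg h

theorem rankTog_comp_orderIso (δ : P ≃o P) (hrk : ∀ q, rk (δ q) = rk q) (f : P → ℕ) :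
    rankTog rk m i (f ∘ δ) = rankTog rk m i f ∘ δ := by
  funext q
  by_cases hi : rk q = i
  · rw [rankTog_of_eq hi, Function.comp_apply, rankTog_of_eq ((hrk q).trans hi),
      togVal_comp_orderIso]
  · simp only [Function.comp_apply]
    rw [rankTog_of_ne hi, rankTog_of_ne ((hrk q).trans_ne hi), Function.comp_apply]

variable (hcov : ∀ p q : P, p ⋖ q → rk q = rk p + 1)
include hcov

theorem minAbove_rankTog (h : rk q + 1 ≠ i) :
    minAbove m (rankTog rk m i f) q = minAbove m f q :=
  minAbove_congr fun x hx => rankTog_of_ne (by rw [hcov q x hx]; exact h)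

theorem maxBelow_rankTog (h : rk q ≠ i + 1) :
    maxBelow (rankTog rk m i f) q = maxBelow f q :=
  maxBelow_congr fun x hx => rankTog_of_ne fun hx' => h (by rw [hcov x q hx, hx'])

theorem togVal_rankTog_of_far (h : i + 2 ≤ rk q ∨ rk q + 2 ≤ i) :
    togVal m (rankTog rk m i f) q = togVal m f q := by
  rw [togVal_eq, togVal_eq, minAbove_rankTog hcov (by omega), maxBelow_rankTog hcov (by omega),
    rankTog_of_ne (by omega)]

theorem rankTog_comm {j : ℕ} (hij : i + 2 ≤ j) (f : P → ℕ) :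
    rankTog rk m i (rankTog rk m j f) = rankTog rk m j (rankTog rk m i f) := by
  funext q
  by_cases hi : rk q = i
  · rw [rankTog_of_eq hi, rankTog_of_ne (by omega), rankTog_of_eq hi,
      togVal_rankTog_of_far hcov (by omega)]
  · by_cases hj : rk q = j
    · rw [rankTog_of_ne hi, rankTog_of_eq hj, rankTog_of_eq hj,
        togVal_rankTog_of_far hcov (by omega)]
    · rw [rankTog_of_ne hi, rankTog_of_ne hj, rankTog_of_ne hj, rankTog_of_ne hi]

theorem IsPPart.rankTog (hf : IsPPart m f) : IsPPart m (rankTog rk m i f) := by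
  let _ := Fintype.toLocallyFiniteOrder (α := P)
  refine ⟨fun q => ?_, (monotone_iff_forall_covBy _).2 fun a b hab => ?_⟩
  · by_cases hi : rk q = i
    · rw [rankTog_of_eq hi, togVal_eq]
      have := maxBelow_le (p := q) hf.2
      have := minAbove_le_bound (m := m) (f := f) (p := q)
      omega
    · rw [rankTog_of_ne hi]
      exact hf.1 q
  · have hr := hcov a b hab
    by_cases ha : rk a = i
    · rw [rankTog_of_eq ha, rankTog_of_ne (by omega), togVal_eq]
      have := maxBelow_le (p := a) hf.2
      have := minAbove_le (m := m) (f := f) hab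
      omega
    · rw [rankTog_of_ne ha]
      by_cases hb : rk b = i
      · rw [rankTog_of_eq hb, togVal_eq]
        have := le_minAbove (p := b) hf
        have := le_maxBelow (f := f) hab
        omega
      · rw [rankTog_of_ne hb]
        exact hf.2 hab.le

theorem rankTog_rankTog (hf : IsPPart m f) : rankTog rk m i (rankTog rk m i f) = f := by
  funext q
  by_cases hi : rk q = i
  · rw [rankTog_of_eq hi, togVal_eq, minAbove_rankTog hcov (by omega),
      maxBelow_rankTog hcov (by omega), rankTog_of_eq hi, togVal_eq]
    have := le_minAbove (p := q) hf
    omega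
  · rw [rankTog_of_ne hi, rankTog_of_ne hi]

end RankToggle

section Words

variable {G : Type*} [Group G] (t : ℕ → G) (r : ℕ)

-- The words of `rowFrom rk m r j` and `rvacAux rk m r j` in the rank toggles `t i`, so that
-- `rowWord t r r` is `Row` and `rvacWord t r r` is `Rvac`.
def rowWord : ℕ → G
  | 0 => t r
  | j + 1 => t (r - (j + 1)) * rowWord j

def rvacWord : ℕ → G
  | 0 => rowWord t r 0
  | j + 1 => rvacWord j * rowWord t r (j + 1)

variable {t r}

theorem commute_rowWord {x : G} {j : ℕ} (h : ∀ i, r - j ≤ i → Commute x (t i)) :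
    Commute x (rowWord t r j) := by
  induction j with
  | zero => exact h r (Nat.sub_le r 0)
  | succ j ih =>
    exact (h _ le_rfl).mul_right (ih fun i hi => h i (by omega))

theorem commute_rvacWord {x : G} {j : ℕ} (h : ∀ i, r - j ≤ i → Commute x (t i)) :
    Commute x (rvacWord t r j) := by
  induction j with
  | zero => exact commute_rowWord h
  | succ j ih => exact (ih fun i hi => h i (by omega)).mul_right (commute_rowWord h)

variable (hinv : ∀ i, (t i)⁻¹ = t i) (hcomm : ∀ i j, i + 2 ≤ j → Commute (t i) (t j))
include hinv hcomm

theorem rvacWord_mul_rowWord_succ {j : ℕ} (hj : j + 1 ≤ r) :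
    rvacWord t r j * rowWord t r (j + 1) = (rowWord t r (j + 1))⁻¹ * rvacWord t r j := by
  induction j with
  | zero =>
    simp only [rvacWord, rowWord, mul_inv_rev, hinv, mul_assoc]
  | succ j ih =>
    set R := rowWord t r (j + 1)
    set V := rvacWord t r j
    set k := r - (j + 2)
    have ih' : V * R = R⁻¹ * V := ih (by omega)
    have hkV : Commute (t k) V := commute_rvacWord fun i hi => hcomm k i (by omega)
    show V * R * (t k * R) = (t k * R)⁻¹ * (V * R)
    calc V * R * (t k * R) = R⁻¹ * (V * t k) * R := by rw [ih']; simp only [mul_assoc]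
      _ = R⁻¹ * t k * (V * R) := by rw [← hkV.eq]; simp only [mul_assoc]
      _ = (t k * R)⁻¹ * (V * R) := by rw [mul_inv_rev, hinv]

theorem rvacWord_mul_self {j : ℕ} (hj : j ≤ r) : rvacWord t r j * rvacWord t r j = 1 := by
  induction j with
  | zero => exact mul_eq_one_iff_eq_inv.2 (hinv r).symm
  | succ j ih =>
    set R := rowWord t r (j + 1)
    set V := rvacWord t r j
    have hVR : V * R = R⁻¹ * V := rvacWord_mul_rowWord_succ hinv hcomm hj
    calc V * R * (V * R) = V * R * V * R := by simp only [mul_assoc]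
      _ = R⁻¹ * (V * V) * R := by rw [hVR]; simp only [mul_assoc]
      _ = 1 := by rw [ih (by omega), mul_one, inv_mul_cancel]

theorem rvacWord_mul_rowWord_mul_rvacWord {j : ℕ} (hj : j ≤ r) :
    rvacWord t r j * rowWord t r j * rvacWord t r j = (rowWord t r j)⁻¹ := by
  cases j with
  | zero =>
    show t r * t r * t r = (t r)⁻¹
    rw [hinv, mul_eq_one_iff_eq_inv.2 (hinv r).symm, one_mul]
  | succ j =>
    set R := rowWord t r (j + 1)
    set V := rvacWord t r j
    have hVR : V * R = R⁻¹ * V := rvacWord_mul_rowWord_succ hinv hcomm hj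
    have hVV : V * V = 1 := rvacWord_mul_self hinv hcomm (by omega)
    calc V * R * R * (V * R) = V * R * R * V * R := by simp only [mul_assoc]
      _ = R⁻¹ * (V * R * V) * R := by
          conv_lhs => rw [hVR]
          simp only [mul_assoc]
      _ = R⁻¹ * R⁻¹ * (V * V) * R := by rw [hVR]; simp only [mul_assoc]
      _ = R⁻¹ := by rw [hVV, mul_one, inv_mul_cancel_right]

end Words

theorem pow_mul_pow_eq_one_of_conj_eq_inv {G : Type*} [Group G] {ν ρ : G}
    (hconj : ν * ρ * ν⁻¹ = ρ⁻¹) {n : ℕ} (hcomm : Commute ν (ρ ^ n)) : ρ ^ n * ρ ^ n = 1 := by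
  have h : ρ ^ n = (ρ ^ n)⁻¹ := by
    rw [← inv_pow, ← hconj, conj_pow, hcomm.eq, mul_inv_cancel_right]
  rw [mul_eq_one_iff_eq_inv, ← h]

theorem isPPart_indicator_Ici {P : Type*} [PartialOrder P] (a : P) :
    IsPPart 1 fun y => if a ≤ y then 1 else 0 := by
  refine ⟨fun y => by dsimp only; split_ifs <;> omega, fun x y hxy => ?_⟩
  by_cases hx : a ≤ x
  · simp [hx, hx.trans hxy]
  · simp [hx]

theorem eq_of_forall_isPPart_apply_eq {P : Type*} [PartialOrder P] {p q : P}
    (h : ∀ f, IsPPart 1 f → f p = f q) : p = q := by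
  have hle : ∀ a b : P, (∀ f, IsPPart 1 f → f a = f b) → a ≤ b := fun a b hab => by
    by_contra hb
    simpa [hb] using hab _ (isPPart_indicator_Ici a)
  exact le_antisymm (hle p q h) (hle q p fun f hf => (h f hf).symm)

section PPartPerm

variable {P : Type*} [PartialOrder P] [Fintype P] {rk : P → ℕ} {m : ℕ}

def precompPerm (δ : P ≃o P) (m : ℕ) : Equiv.Perm {f : P → ℕ // IsPPart m f} where
  toFun f := ⟨f.1 ∘ δ, f.2.comp_monotone δ.monotone⟩
  invFun f := ⟨f.1 ∘ δ.symm, f.2.comp_monotone δ.symm.monotone⟩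
  left_inv f := Subtype.ext (funext fun p => congrArg f.1 (δ.apply_symm_apply p))
  right_inv f := Subtype.ext (funext fun p => congrArg f.1 (δ.symm_apply_apply p))

variable (hcov : ∀ p q : P, p ⋖ q → rk q = rk p + 1)

noncomputable def rankTogPerm (m i : ℕ) : Equiv.Perm {f : P → ℕ // IsPPart m f} :=
  Function.Involutive.toPerm (fun f => ⟨rankTog rk m i f, f.2.rankTog hcov⟩)
    fun f => Subtype.ext (rankTog_rankTog hcov f.2)

theorem rankTogPerm_inv (i : ℕ) : (rankTogPerm hcov m i)⁻¹ = rankTogPerm hcov m i :=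
  inv_eq_of_mul_eq_one_right (Equiv.ext fun f => Subtype.ext (rankTog_rankTog hcov f.2))

theorem commute_rankTogPerm {i j : ℕ} (hij : i + 2 ≤ j) :
    Commute (rankTogPerm hcov m i) (rankTogPerm hcov m j) :=
  Equiv.ext fun f => Subtype.ext (rankTog_comm hcov hij f.1)

theorem commute_precompPerm_rankTogPerm (δ : P ≃o P) (hrk : ∀ q, rk (δ q) = rk q) (i : ℕ) :
    Commute (precompPerm δ m) (rankTogPerm hcov m i) :=
  Equiv.ext fun f => Subtype.ext (rankTog_comp_orderIso δ hrk f.1).symm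

theorem rowWord_rankTogPerm_apply (r j : ℕ) (f : {f : P → ℕ // IsPPart m f}) :
    (rowWord (rankTogPerm hcov m) r j f).1 = rowFrom rk m r j f.1 := by
  induction j with
  | zero => rfl
  | succ j ih => exact congrArg (rankTog rk m (r - (j + 1))) ih

theorem rowWord_rankTogPerm_pow_apply (r k : ℕ) (f : {f : P → ℕ // IsPPart m f}) :
    ((rowWord (rankTogPerm hcov m) r r ^ k) f).1 = (rowm rk m r)^[k] f.1 := by
  induction k with
  | zero => rfl
  | succ k ih =>
    rw [pow_succ', Equiv.Perm.mul_apply, rowWord_rankTogPerm_apply, ih,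
      Function.iterate_succ_apply']
    rfl

end PPartPerm

theorem row_pow_automorphism_involutive_general {P : Type*} [PartialOrder P] [Fintype P]
    (rk : P → ℕ) (r : ℕ)
    (hcov : ∀ p q : P, p ⋖ q → rk q = rk p + 1)
    (hmin : ∀ p : P, IsMin p → rk p = 0)
    (δ : P ≃o P)
    (h : ∀ m : ℕ, ∀ f, IsPPart m f →
      (rowm rk m r)^[r + 2] f = fun p => f (δ p)) :
    ∀ p : P, δ (δ p) = p := by
  set t := rankTogPerm hcov 1
  have ht_inv : ∀ i, (t i)⁻¹ = t i := rankTogPerm_inv hcov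
  have ht_comm : ∀ i j, i + 2 ≤ j → Commute (t i) (t j) := fun _ _ => commute_rankTogPerm hcov
  have hrow : rowWord t r r ^ (r + 2) = precompPerm δ 1 :=
    Equiv.ext fun f =>
      Subtype.ext ((rowWord_rankTogPerm_pow_apply hcov r _ f).trans (h 1 f.1 f.2))
  have hvac_inv : (rvacWord t r r)⁻¹ = rvacWord t r r :=
    inv_eq_of_mul_eq_one_right (rvacWord_mul_self ht_inv ht_comm le_rfl)
  have hconj : rvacWord t r r * rowWord t r r * (rvacWord t r r)⁻¹ = (rowWord t r r)⁻¹ := by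
    rw [hvac_inv, rvacWord_mul_rowWord_mul_rvacWord ht_inv ht_comm le_rfl]
  have hcomm : Commute (rvacWord t r r) (rowWord t r r ^ (r + 2)) := hrow ▸
    (commute_rvacWord fun i _ =>
      commute_precompPerm_rankTogPerm hcov δ (rank_apply_orderIso hcov hmin δ) i).symm
  have hδ : precompPerm δ 1 * precompPerm δ 1 = 1 :=
    hrow ▸ pow_mul_pow_eq_one_of_conj_eq_inv hconj hcomm
  intro p
  exact eq_of_forall_isPPart_apply_eq fun f hf => congrArg (fun σ => (σ ⟨f, hf⟩).1 p) hδ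

/-- For a finite graded poset `P`, if `Row^{r(P)+2}` acting on `P`-partitions of height
`m` (for all `m`) equals the map induced by a poset automorphism `δ` of `P`, then `δ` is
an involution. -/
theorem row_pow_automorphism_involutive {P : Type*} [PartialOrder P] [Fintype P]
    (rk : P → ℕ) (r : ℕ)
    (hcov : ∀ p q : P, p ⋖ q → rk q = rk p + 1)
    (hmin : ∀ p : P, IsMin p → rk p = 0)
    (hmax : ∀ p : P, IsMax p → rk p = r)
    (δ : P ≃o P)
    (h : ∀ m : ℕ, ∀ f, IsPPart m f →
      (rowm rk m r)^[r + 2] f = fun p => f (δ p)) :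
    ∀ p : P, δ (δ p) = p :=
  row_pow_automorphism_involutive_general rk r hcov hmin δ h
end
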